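/- Over the binary field, for each natural number t ≥ 0 one has n_2(3,3+4t,2) = 6+7t, n_2(3,4+4t,2) = 7+7t, n_2(3,5+4t,2) = 10+7t, and n_2(3,6+4t,2) = 11+7t; moreover n_2(3,1,2) = n_2(3,2,2) = 5. -/

import Mathlib

/-!
Lower bounds. Summing the weights of the seven nonzero codewords of a binary `[n,3,d]` code
counts every coordinate at most four times, so `7d ≤ 4n` (Plotkin); for odd `d` the parity
extension is an `[n+1,3,d+1]` code, whence `7(d+1) ≤ 4(n+1)`. For `d ≤ 2` locality gives
`n ≥ 5`: if `n ≤ 4`, enlarge the recovery set of a coordinate `i` to a set `S` of size 2. A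
codeword vanishing on `S` vanishes at `i`, so it has at most one nonzero coordinate, which its own
recovery set then forces to be zero. Thus restriction to `S` is injective and the dimension is at
most 2.

Upper bounds. Explicit binary codes of lengths 5, 6, 7, 10, 11 in which every coordinate is the
sum of two others; appending the seven coordinates of the simplex code adds 7 to the length and
4 to every nonzero weight, and keeps locality 2.
-/

open scoped Classical

/-- The Hamming weight of a vector: the number of nonzero coordinates. -/
noncomputable def hamWt {F : Type} [Field F] {n : ℕ} (c : Fin n → F) : ℕ :=
  (Finset.univ.filter fun i => c i ≠ 0).card

/-- `C` is a linear `[n,k,d]` code over `F`: a `k`-dimensional subspace of `F^n`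
in which every nonzero codeword has Hamming weight at least `d`. -/
def IsCode {F : Type} [Field F] {n : ℕ} (k d : ℕ) (C : Submodule F (Fin n → F)) : Prop :=
  Module.finrank F ↥C = k ∧ ∀ c ∈ C, c ≠ 0 → d ≤ hamWt c

/-- `C ⊆ F^n` has locality `r`: every coordinate `i` has a recovery set `S` of at most `r`
other coordinates such that any two codewords agreeing on `S` agree at `i`. -/
def HasLocality {F : Type} [Field F] {n : ℕ} (C : Submodule F (Fin n → F)) (r : ℕ) : Prop :=
  ∀ i : Fin n, ∃ S : Finset (Fin n), i ∉ S ∧ S.card ≤ r ∧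
    ∀ c ∈ C, ∀ c' ∈ C, (∀ j ∈ S, c j = c' j) → c i = c' i

/-- There exists a linear `[n,k,d]_q` code (over some field with `q` elements). -/
def CodeExists (q n k d : ℕ) : Prop :=
  ∃ (F : Type) (_ : Field F), Nat.card F = q ∧
    ∃ C : Submodule F (Fin n → F), IsCode k d C

/-- There exists a linear `[n,k,d]_q` code with locality `r`. -/
def LRCExists (q n k d r : ℕ) : Prop :=
  ∃ (F : Type) (_ : Field F), Nat.card F = q ∧
    ∃ C : Submodule F (Fin n → F), IsCode k d C ∧ HasLocality C r

/-- `n_q(k,d)`: the smallest length of a linear `[n,k,d]_q` code. -/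
noncomputable def nCode (q k d : ℕ) : ℕ := sInf {n | CodeExists q n k d}

/-- `n_q(k,d,r)`: the smallest length of a linear `[n,k,d]_q` code with locality `r`. -/
noncomputable def nLRC (q k d r : ℕ) : ℕ := sInf {n | LRCExists q n k d r}

/-- There exists an `[n,k]_q` code with locality `r` (no condition on minimum distance). -/
def LRCExistsNoDist (q n k r : ℕ) : Prop :=
  ∃ (F : Type) (_ : Field F), Nat.card F = q ∧
    ∃ C : Submodule F (Fin n → F), Module.finrank F ↥C = k ∧ HasLocality C r

/-- `n'_q(k,r)`: the smallest length of an `[n,k]_q` code with locality `r`. -/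
noncomputable def nLRCNoDist (q k r : ℕ) : ℕ := sInf {n | LRCExistsNoDist q n k r}

/-- The dual code of `C`. -/
def dualCode {F : Type} [Field F] {n : ℕ} (C : Submodule F (Fin n → F)) : Set (Fin n → F) :=
  {x | ∀ c ∈ C, ∑ j, x j * c j = 0}

/-- `C` is projective: non-degenerate and no two coordinates are proportional. -/
def IsProjective {F : Type} [Field F] {n : ℕ} (C : Submodule F (Fin n → F)) : Prop :=
  (∀ i : Fin n, ∃ c ∈ C, c i ≠ 0) ∧
    (∀ i j : Fin n, i ≠ j → ∀ lam : F, lam ≠ 0 → ∃ c ∈ C, c i ≠ lam * c j)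

/-- The Griesmer bound `g_q(k,d) = ∑_{i=0}^{k-1} ⌈d/q^i⌉`. -/
noncomputable def griesmer (q k d : ℕ) : ℕ :=
  ∑ i ∈ Finset.range k, ⌈(d : ℚ) / (q : ℚ) ^ i⌉₊

open Finset Matrix Module

section Weights

variable {F : Type} [Field F] {n : ℕ}

theorem hamWt_eq_hammingNorm [DecidableEq F] (c : Fin n → F) : hamWt c = hammingNorm c := by
  unfold hamWt hammingNorm
  congr

theorem hammingNorm_append {β : Type} [Zero β] [DecidableEq β] {m : ℕ} (u : Fin n → β)
    (v : Fin m → β) :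
    hammingNorm (Fin.append u v) = hammingNorm u + hammingNorm v := by
  simp only [hammingNorm, card_filter, Fin.sum_univ_add, Fin.append_left, Fin.append_right]

end Weights

section Generators

variable {F : Type} [Field F] {n m k : ℕ}

theorem mulVec_append (G : Matrix (Fin n) (Fin k) F) (H : Matrix (Fin m) (Fin k) F)
    (x : Fin k → F) : Fin.append G H *ᵥ x = Fin.append (G *ᵥ x) (H *ᵥ x) := by
  funext j
  refine Fin.addCases (fun j => ?_) (fun j => ?_) j
  · simp only [Fin.append_left]; exact congrArg (· ⬝ᵥ x) (Fin.append_left G H j)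
  · simp only [Fin.append_right]; exact congrArg (· ⬝ᵥ x) (Fin.append_right G H j)

/-- The rows of `G` are the coordinate functionals of the code `range G.mulVecLin`; this is the
transpose of the usual generator matrix. -/
structure IsLRCGenerator [DecidableEq F] (G : Matrix (Fin n) (Fin k) F) (d r : ℕ) : Prop where
  eq_zero_of_mulVec_eq_zero : ∀ x, G *ᵥ x = 0 → x = 0
  le_hammingNorm_mulVec : ∀ x ≠ 0, d ≤ hammingNorm (G *ᵥ x)
  exists_row_mem_span : ∀ j, ∃ S : Finset (Fin n), j ∉ S ∧ #S ≤ r ∧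
    G j ∈ Submodule.span F (G '' S)

theorem hasLocality_range_mulVecLin {r : ℕ} (G : Matrix (Fin n) (Fin k) F)
    (hG : ∀ j, ∃ S : Finset (Fin n), j ∉ S ∧ #S ≤ r ∧
      G j ∈ Submodule.span F (G '' S)) :
    HasLocality (LinearMap.range G.mulVecLin) r := by
  intro j
  obtain ⟨S, hjS, hS, hspan⟩ := hG j
  refine ⟨S, hjS, hS, ?_⟩
  rintro _ ⟨x, rfl⟩ _ ⟨y, rfl⟩ hxy
  refine Submodule.span_induction (p := fun v _ => v ⬝ᵥ x = v ⬝ᵥ y) ?_ ?_ ?_ ?_ hspan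
  · rintro _ ⟨s, hs, rfl⟩
    exact hxy s hs
  · simp
  · intro u v _ _ hu hv
    simp [add_dotProduct, hu, hv]
  · intro a v _ hv
    simp [smul_dotProduct, hv]

theorem IsLRCGenerator.lrcExists [DecidableEq F] {G : Matrix (Fin n) (Fin k) F} {d r : ℕ}
    (hG : IsLRCGenerator G d r) : LRCExists (Nat.card F) n k d r := by
  have hinj : Function.Injective G.mulVecLin := by
    rw [← LinearMap.ker_eq_bot, ker_mulVecLin_eq_bot_iff]
    exact hG.eq_zero_of_mulVec_eq_zero
  refine ⟨F, inferInstance, rfl, LinearMap.range G.mulVecLin, ⟨?_, ?_⟩,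
    hasLocality_range_mulVecLin G hG.exists_row_mem_span⟩
  · rw [LinearMap.finrank_range_of_inj hinj, finrank_fin_fun]
  · rintro _ ⟨x, rfl⟩ hx
    rw [hamWt_eq_hammingNorm]
    exact hG.le_hammingNorm_mulVec x (by rintro rfl; exact hx (map_zero _))

theorem IsLRCGenerator.mono [DecidableEq F] {G : Matrix (Fin n) (Fin k) F} {d d' r : ℕ}
    (hG : IsLRCGenerator G d r) (hd : d' ≤ d) : IsLRCGenerator G d' r :=
  ⟨hG.eq_zero_of_mulVec_eq_zero, fun x hx => hd.trans (hG.le_hammingNorm_mulVec x hx),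
    hG.exists_row_mem_span⟩

theorem exists_row_mem_span_of_eq_add {G : Matrix (Fin n) (Fin k) F}
    (hG : ∀ j, ∃ j₁ j₂, j₁ ≠ j ∧ j₂ ≠ j ∧ G j = G j₁ + G j₂) (j : Fin n) :
    ∃ S : Finset (Fin n), j ∉ S ∧ #S ≤ 2 ∧ G j ∈ Submodule.span F (G '' S) := by
  obtain ⟨j₁, j₂, h₁, h₂, hj⟩ := hG j
  refine ⟨{j₁, j₂}, by simp [h₁.symm, h₂.symm], card_le_two, ?_⟩
  rw [hj]
  exact add_mem (Submodule.subset_span ⟨j₁, by simp, rfl⟩)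
    (Submodule.subset_span ⟨j₂, by simp, rfl⟩)

theorem exists_mem_span_image_map {V : Type} [AddCommGroup V] [Module F V] {G : Fin n → V}
    {A : Fin m → V} {r : ℕ} (e : Fin n ↪ Fin m) (hA : ∀ j, A (e j) = G j) {j : Fin n}
    (hG : ∃ S : Finset (Fin n), j ∉ S ∧ #S ≤ r ∧ G j ∈ Submodule.span F (G '' S)) :
    ∃ S : Finset (Fin m), e j ∉ S ∧ #S ≤ r ∧ A (e j) ∈ Submodule.span F (A '' S) := by
  obtain ⟨S, hjS, hS, hspan⟩ := hG
  refine ⟨S.map e, by simpa using hjS, by simpa using hS, ?_⟩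
  have himage : A '' (S.map e : Set (Fin m)) = G '' S := by
    rw [coe_map, Set.image_image]
    exact Set.image_congr fun j _ => hA j
  rwa [hA, himage]

theorem IsLRCGenerator.append [DecidableEq F] {G : Matrix (Fin n) (Fin k) F}
    {H : Matrix (Fin m) (Fin k) F} {d e r : ℕ} (hG : IsLRCGenerator G d r)
    (hH : IsLRCGenerator H e r) : IsLRCGenerator (Fin.append G H) (d + e) r := by
  refine ⟨fun x hx => hH.eq_zero_of_mulVec_eq_zero x ?_, fun x hx => ?_, fun j => ?_⟩
  · funext j
    simpa [mulVec_append] using congrFun hx (Fin.natAdd n j)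
  · rw [mulVec_append, hammingNorm_append]
    exact add_le_add (hG.le_hammingNorm_mulVec x hx) (hH.le_hammingNorm_mulVec x hx)
  · refine Fin.addCases (fun j => ?_) (fun j => ?_) j
    · exact exists_mem_span_image_map (Fin.castAddEmb m) (Fin.append_left G H)
        (hG.exists_row_mem_span j)
    · exact exists_mem_span_image_map (Fin.natAddEmb n) (Fin.append_right G H)
        (hH.exists_row_mem_span j)

end Generators

section BinaryConstructions

def binarySimplex : Matrix (Fin 7) (Fin 3) (ZMod 2) :=
  !![1, 0, 0; 0, 1, 0; 0, 0, 1; 1, 1, 0; 0, 1, 1; 1, 0, 1; 1, 1, 1]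

def gen5 : Matrix (Fin 5) (Fin 3) (ZMod 2) :=
  !![1, 0, 0; 0, 1, 0; 0, 0, 1; 1, 1, 0; 1, 0, 1]

def gen6 : Matrix (Fin 6) (Fin 3) (ZMod 2) :=
  !![1, 0, 0; 0, 1, 0; 0, 0, 1; 1, 1, 0; 0, 1, 1; 1, 0, 1]

def gen10 : Matrix (Fin 10) (Fin 3) (ZMod 2) :=
  !![1, 0, 0; 1, 0, 0; 0, 1, 0; 0, 1, 0; 0, 0, 1; 0, 0, 1; 1, 1, 0; 1, 0, 1; 0, 1, 1; 1, 1, 1]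

def gen11 : Matrix (Fin 11) (Fin 3) (ZMod 2) :=
  !![1, 0, 0; 1, 0, 0; 0, 1, 0; 0, 1, 0; 0, 0, 1; 0, 0, 1; 1, 1, 0; 1, 0, 1; 0, 1, 1; 1, 1, 1;
    1, 1, 1]

theorem isLRCGenerator_binarySimplex : IsLRCGenerator binarySimplex 4 2 :=
  ⟨by decide, by decide, exists_row_mem_span_of_eq_add (by decide)⟩

theorem isLRCGenerator_gen5 : IsLRCGenerator gen5 2 2 :=
  ⟨by decide, by decide, exists_row_mem_span_of_eq_add (by decide)⟩

theorem isLRCGenerator_gen6 : IsLRCGenerator gen6 3 2 :=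
  ⟨by decide, by decide, exists_row_mem_span_of_eq_add (by decide)⟩

theorem isLRCGenerator_gen10 : IsLRCGenerator gen10 5 2 :=
  ⟨by decide, by decide, exists_row_mem_span_of_eq_add (by decide)⟩

theorem isLRCGenerator_gen11 : IsLRCGenerator gen11 6 2 :=
  ⟨by decide, by decide, exists_row_mem_span_of_eq_add (by decide)⟩

theorem IsLRCGenerator.lrcExists_add_simplex {n d : ℕ} {G : Matrix (Fin n) (Fin 3) (ZMod 2)}
    (hG : IsLRCGenerator G d 2) (t : ℕ) : LRCExists 2 (n + 7 * t) 3 (d + 4 * t) 2 := by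
  suffices ∃ G' : Matrix (Fin (n + 7 * t)) (Fin 3) (ZMod 2), IsLRCGenerator G' (d + 4 * t) 2 by
    obtain ⟨G', hG'⟩ := this
    simpa using hG'.lrcExists
  induction t with
  | zero => exact ⟨G, hG⟩
  | succ t ih =>
    obtain ⟨G', hG'⟩ := ih
    rw [Nat.mul_succ, Nat.mul_succ, ← add_assoc, ← add_assoc]
    exact ⟨_, hG'.append isLRCGenerator_binarySimplex⟩

end BinaryConstructions

section Plotkin

variable {F : Type} [Field F] [Fintype F] {n : ℕ}

theorem LinearMap.pow_finrank_sub_one_le_card_ker {V : Type} [AddCommGroup V] [Module F V]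
    [Fintype V] (ℓ : V →ₗ[F] F) :
    Fintype.card F ^ (finrank F V - 1) ≤ Fintype.card (LinearMap.ker ℓ) := by
  have hrange : finrank F (LinearMap.range ℓ) ≤ 1 :=
    (Submodule.finrank_le _).trans (finrank_self F).le
  have hsum := ℓ.finrank_range_add_finrank_ker
  rw [Module.card_eq_pow_finrank (K := F) (V := LinearMap.ker ℓ)]
  exact Nat.pow_le_pow_right Fintype.card_pos (by omega)

theorem Submodule.card_filter_apply_ne_zero_le (C : Submodule F (Fin n → F)) (j : Fin n) :
    #{c : C | (c : Fin n → F) j ≠ 0} ≤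
      Fintype.card F ^ finrank F C - Fintype.card F ^ (finrank F C - 1) := by
  have hker := ((LinearMap.proj j).comp C.subtype).pow_finrank_sub_one_le_card_ker
  have hzero : Fintype.card (LinearMap.ker ((LinearMap.proj j).comp C.subtype)) =
      #{c : C | (c : Fin n → F) j = 0} := by
    rw [Fintype.card_subtype]
    rfl
  have hsplit := card_filter_add_card_filter_not (s := univ) (fun c : C => (c : Fin n → F) j = 0)
  rw [card_univ, Module.card_eq_pow_finrank (K := F)] at hsplit
  simp only [ne_eq]
  omega

theorem IsCode.plotkin {k d : ℕ} {C : Submodule F (Fin n → F)} (hC : IsCode k d C) :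
    (Fintype.card F ^ k - 1) * d ≤ n * (Fintype.card F ^ k - Fintype.card F ^ (k - 1)) := by
  obtain ⟨hk, hw⟩ := hC
  have hnonzero :
      (Fintype.card F ^ k - 1) * d ≤ ∑ c ∈ univ.erase (0 : C), hamWt (c : Fin n → F) := by
    rw [← smul_eq_mul, ← hk, ← Module.card_eq_pow_finrank, ← card_univ,
      ← card_erase_of_mem (mem_univ 0)]
    refine card_nsmul_le_sum _ _ _ fun c hc => hw c c.2 ?_
    simpa using ne_of_mem_erase hc
  calc (Fintype.card F ^ k - 1) * d ≤ ∑ c : C, hamWt (c : Fin n → F) :=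
        hnonzero.trans_eq (sum_erase _ (by simp [hamWt]))
    _ = ∑ j, #{c : C | (c : Fin n → F) j ≠ 0} := by
        simp only [hamWt, card_filter]
        exact sum_comm
    _ ≤ ∑ _j : Fin n, (Fintype.card F ^ k - Fintype.card F ^ (k - 1)) :=
        sum_le_sum fun j _ => hk ▸ C.card_filter_apply_ne_zero_le j
    _ = n * (Fintype.card F ^ k - Fintype.card F ^ (k - 1)) := by simp

end Plotkin

section ParityExtension

variable {F : Type} [Field F] {n : ℕ}

theorem eq_one_of_ne_zero_of_natCard_eq_two (hF : Nat.card F = 2) {x : F} (hx : x ≠ 0) :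
    x = 1 := by
  have : Finite F := Nat.finite_of_card_ne_zero (by omega)
  have : Subsingleton Fˣ := Finite.card_le_one_iff_subsingleton.mp (by rw [Nat.card_units, hF])
  exact congrArg Units.val (Subsingleton.elim (Units.mk0 x hx) 1)

theorem natCast_eq_zero_iff_even_of_natCard_eq_two (hF : Nat.card F = 2) (m : ℕ) :
    (m : F) = 0 ↔ Even m := by
  have : CharP F 2 := CharTwo.of_one_ne_zero_of_two_eq_zero one_ne_zero <| by
    by_contra h
    have h2 := eq_one_of_ne_zero_of_natCard_eq_two hF h
    exact one_ne_zero (by linear_combination h2 : (1 : F) = 0)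
  rw [CharP.cast_eq_zero_iff F 2, even_iff_two_dvd]

theorem sum_eq_hamWt_of_natCard_eq_two (hF : Nat.card F = 2) (c : Fin n → F) :
    ∑ j, c j = hamWt c := by
  rw [hamWt, ← sum_filter_ne_zero, card_eq_sum_ones, Nat.cast_sum, Nat.cast_one]
  exact sum_congr rfl fun j hj => eq_one_of_ne_zero_of_natCard_eq_two hF (mem_filter.mp hj).2

/-- `c ↦ (c, ∑ j, c j)`. -/
def parityExtension (F : Type) [Field F] (n : ℕ) : (Fin n → F) →ₗ[F] (Fin (n + 1) → F) :=
  LinearMap.pi (Fin.lastCases (∑ j, LinearMap.proj j) LinearMap.proj)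

@[simp]
theorem parityExtension_castSucc (c : Fin n → F) (j : Fin n) :
    parityExtension F n c j.castSucc = c j := by
  simp [parityExtension]

@[simp]
theorem parityExtension_last (c : Fin n → F) :
    parityExtension F n c (Fin.last n) = ∑ j, c j := by
  simp [parityExtension]

theorem parityExtension_injective : Function.Injective (parityExtension F n) :=
  fun c c' h => funext fun j => by simpa using congrFun h j.castSucc

theorem hamWt_parityExtension (hF : Nat.card F = 2) (c : Fin n → F) :
    hamWt (parityExtension F n c) = if Even (hamWt c) then hamWt c else hamWt c + 1 := by
  have hsplit : hamWt (parityExtension F n c) = hamWt c + if ∑ j, c j = 0 then 0 else 1 := by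
    simp only [hamWt, card_filter, Fin.sum_univ_castSucc, parityExtension_castSucc,
      parityExtension_last]
    congr 1
    split_ifs <;> simp_all
  rw [hsplit, sum_eq_hamWt_of_natCard_eq_two hF, natCast_eq_zero_iff_even_of_natCard_eq_two hF]
  split_ifs <;> rfl

theorem IsCode.map_parityExtension (hF : Nat.card F = 2) {k d : ℕ} {C : Submodule F (Fin n → F)}
    (hC : IsCode k d C) (hd : Odd d) : IsCode k (d + 1) (C.map (parityExtension F n)) := by
  refine ⟨?_, ?_⟩
  · rw [← hC.1]
    exact (Submodule.equivMapOfInjective _ parityExtension_injective C).symm.finrank_eq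
  · rintro _ ⟨c, hc, rfl⟩ hne
    have hdc := hC.2 c hc (by rintro rfl; exact hne (map_zero _))
    rw [hamWt_parityExtension hF]
    obtain ⟨b, rfl⟩ := hd
    split_ifs with h
    · obtain ⟨a, ha⟩ := h
      omega
    · omega

end ParityExtension

section Locality

variable {F : Type} [Field F] {n r : ℕ} {C : Submodule F (Fin n → F)}

theorem finrank_le_card_of_eq_zero_of_apply_eq_zero (T : Finset (Fin n))
    (hT : ∀ c ∈ C, (∀ j ∈ T, c j = 0) → c = 0) : finrank F C ≤ #T := by
  let restrict : C →ₗ[F] (T → F) := LinearMap.funLeft F F (↑) ∘ₗ C.subtype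
  have hinj : Function.Injective restrict := by
    rw [← LinearMap.ker_eq_bot, LinearMap.ker_eq_bot']
    intro c hc
    exact Subtype.ext <| hT c c.2 fun j hj => congrFun hc ⟨j, hj⟩
  simpa using LinearMap.finrank_le_finrank_of_injective hinj

theorem HasLocality.exists_recovery_apply_eq_zero (hC : HasLocality C r) (i : Fin n) :
    ∃ S : Finset (Fin n), i ∉ S ∧ #S ≤ r ∧
      ∀ c ∈ C, (∀ j ∈ S, c j = 0) → c i = 0 := by
  obtain ⟨S, hiS, hS, hrec⟩ := hC i
  exact ⟨S, hiS, hS, fun c hc h => hrec c hc 0 C.zero_mem h⟩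

theorem HasLocality.two_le_hamWt (hC : HasLocality C r) {c : Fin n → F} (hc : c ∈ C)
    (hc0 : c ≠ 0) : 2 ≤ hamWt c := by
  by_contra! hwt
  obtain ⟨m, hm⟩ : ∃ m, c m ≠ 0 := Function.ne_iff.mp hc0
  obtain ⟨S, hmS, -, hrec⟩ := hC.exists_recovery_apply_eq_zero m
  refine hm (hrec c hc fun j hj => ?_)
  by_contra hj0
  have hsupp : #{j | c j ≠ 0} ≤ 1 := by simpa [hamWt] using Nat.lt_succ_iff.mp hwt
  exact hmS (card_le_one.mp hsupp j (by simpa using hj0) m (by simpa using hm) ▸ hj)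

theorem HasLocality.finrank_le (hC : HasLocality C r) (hn : n ≤ r + 2) : finrank F C ≤ r := by
  rcases le_or_gt n r with hnr | hrn
  · exact (Submodule.finrank_le C).trans (by simpa using hnr)
  let i : Fin n := ⟨0, by omega⟩
  obtain ⟨S, hiS, hS, hrec⟩ := hC.exists_recovery_apply_eq_zero i
  obtain ⟨T, hST, hTi, hT⟩ :=
    exists_subsuperset_card_eq (subset_erase.mpr ⟨subset_univ S, hiS⟩)
      hS (by rw [card_erase_of_mem (mem_univ i), card_univ, Fintype.card_fin]; omega)
  refine hT ▸ finrank_le_card_of_eq_zero_of_apply_eq_zero T fun c hc hcT => ?_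
  by_contra hc0
  have hci : c i = 0 := hrec c hc fun j hj => hcT j (hST hj)
  have hsupp : ({j | c j ≠ 0} : Finset (Fin n)) ⊆ univ \ insert i T := by
    intro j hj
    simp only [mem_filter, mem_univ, true_and] at hj
    simp only [mem_sdiff, mem_univ, mem_insert, true_and, not_or]
    exact ⟨fun h => hj (h ▸ hci), fun h => hj (hcT j h)⟩
  have hcard : #(univ \ insert i T) = n - (r + 1) := by
    rw [card_sdiff_of_subset (subset_univ _), card_insert_of_notMem (notMem_mono hTi (by simp)),
      hT, card_univ, Fintype.card_fin]
  have hsupp_card := card_le_card hsupp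
  have hwt := hC.two_le_hamWt hc hc0
  simp only [hamWt] at hwt
  omega

end Locality

theorem LRCExists.codeExists {q n k d r : ℕ} (h : LRCExists q n k d r) : CodeExists q n k d :=
  let ⟨F, hF, hq, C, hC, _⟩ := h
  ⟨F, hF, hq, C, hC⟩

theorem CodeExists.seven_mul_le {n d : ℕ} (h : CodeExists 2 n 3 d) : 7 * d ≤ 4 * n := by
  obtain ⟨F, _, hF, C, hC⟩ := h
  have : Finite F := Nat.finite_of_card_ne_zero (by omega)
  have : Fintype F := Fintype.ofFinite F
  have hplotkin := hC.plotkin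
  rw [← Nat.card_eq_fintype_card, hF] at hplotkin
  omega

theorem CodeExists.succ_of_odd {n k d : ℕ} (h : CodeExists 2 n k d) (hd : Odd d) :
    CodeExists 2 (n + 1) k (d + 1) :=
  let ⟨F, _, hF, _, hC⟩ := h
  ⟨F, _, hF, _, hC.map_parityExtension hF hd⟩

theorem LRCExists.five_le {q n d : ℕ} (h : LRCExists q n 3 d 2) : 5 ≤ n := by
  obtain ⟨F, _, -, C, ⟨hk, -⟩, hC⟩ := h
  by_contra! hn
  have := hC.finrank_le (by omega)
  omega

theorem n2_k3_r2 :
    (∀ t : ℕ, nLRC 2 3 (3 + 4 * t) 2 = 6 + 7 * t ∧ nLRC 2 3 (4 + 4 * t) 2 = 7 + 7 * t ∧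
        nLRC 2 3 (5 + 4 * t) 2 = 10 + 7 * t ∧ nLRC 2 3 (6 + 4 * t) 2 = 11 + 7 * t) ∧
    nLRC 2 3 1 2 = 5 ∧
    nLRC 2 3 2 2 = 5 := by
  have even_bound {n d : ℕ} (h : LRCExists 2 n 3 d 2) : 7 * d ≤ 4 * n :=
    h.codeExists.seven_mul_le
  have odd_bound {n d : ℕ} (h : LRCExists 2 n 3 d 2) (hd : Odd d) : 7 * (d + 1) ≤ 4 * (n + 1) :=
    (h.codeExists.succ_of_odd hd).seven_mul_le
  refine ⟨fun t => ⟨?_, ?_, ?_, ?_⟩, ?_, ?_⟩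
  · refine IsLeast.csInf_eq ⟨isLRCGenerator_gen6.lrcExists_add_simplex t, fun n h => ?_⟩
    have := odd_bound h ⟨2 * t + 1, by ring⟩
    omega
  · refine IsLeast.csInf_eq
      ⟨isLRCGenerator_binarySimplex.lrcExists_add_simplex t, fun n h => ?_⟩
    have := even_bound h
    omega
  · refine IsLeast.csInf_eq ⟨isLRCGenerator_gen10.lrcExists_add_simplex t, fun n h => ?_⟩
    have := odd_bound h ⟨2 * t + 2, by ring⟩
    omega
  · refine IsLeast.csInf_eq ⟨isLRCGenerator_gen11.lrcExists_add_simplex t, fun n h => ?_⟩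
    have := even_bound h
    omega
  · exact IsLeast.csInf_eq ⟨by simpa using (isLRCGenerator_gen5.mono one_le_two).lrcExists,
      fun n h => h.five_le⟩
  · exact IsLeast.csInf_eq ⟨by simpa using isLRCGenerator_gen5.lrcExists, fun n h => h.five_le⟩
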